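/- Let H be a Hilbert space and F : H → ℝ a norm-continuous functional that is weakly lower semicontinuous, i.e. F(u) ≤ liminf F(u_n) whenever u_n ⇀ u. Let V₀ ⊆ V₁ ⊆ ⋯ be closed subspaces with dense union in a closed subspace V_∞, and let K ⊆ H be weakly closed with the approximation property: for every u ∈ V_∞ ∩ K there exist u_k ∈ V_k ∩ K with u_k → u. If for each k, Φ_k minimizes F over V_k ∩ K, and the Φ_k lie in a bounded set and every weak limit of a subsequence lies in V_∞ ∩ K, then lim_{k→∞} F(Φ_k) = min_{u ∈ V_∞ ∩ K} F(u). -/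

import Mathlib

/-!
A bounded sequence of minimizers `Φ k` has a weakly convergent subsequence (sequential
Banach–Alaoglu in the separable closed span of the sequence), whose limit `v` lies in
`Vinf ∩ K`. Nesting makes `F (Φ k)` antitone, and a recovery sequence `w k ∈ V k ∩ K`
for `u ∈ Vinf ∩ K` gives `F (Φ k) ≤ F (w k) → F u`. If `F (Φ k) < F v` for some `k`, the
recovery sequence of `v` and the tail of the subsequence both converge weakly to `v`, with
`F` eventually above resp. below `F (Φ k)`, contradicting weak lower semicontinuity. Hence
`F v ≤ F (Φ k)`, so `v` minimizes `F` on `Vinf ∩ K` and `F (Φ k) → F v` by squeezing.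
-/

open Filter

/-- Weak convergence in a Hilbert space, tested against continuous linear functionals. -/
def WeakConv {H : Type*} [NormedAddCommGroup H] [InnerProductSpace ℝ H]
    (u : ℕ → H) (v : H) : Prop :=
  ∀ f : H →L[ℝ] ℝ, Tendsto (fun n => f (u n)) atTop (nhds (f v))

open Set Topology InnerProductSpace
open scoped RealInnerProductSpace

section WeakConvergence

variable {H : Type*} [NormedAddCommGroup H] [InnerProductSpace ℝ H]

theorem Filter.Tendsto.weakConv {u : ℕ → H} {v : H} (h : Tendsto u atTop (𝓝 v)) :
    WeakConv u v :=
  fun f => (f.continuous.tendsto v).comp h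

theorem WeakConv.of_mem_segment {a b z : ℕ → H} {v : H} (ha : WeakConv a v)
    (hb : WeakConv b v) (hz : ∀ n, z n ∈ segment ℝ (a n) (b n)) : WeakConv z v := by
  intro f
  have hfz : ∀ n, f (z n) ∈ uIcc (f (a n)) (f (b n)) := fun n => by
    rw [← segment_eq_uIcc]
    have := mem_image_of_mem f.toLinearMap.toAffineMap (hz n)
    rwa [image_segment] at this
  have hmin := (ha f).min (hb f)
  have hmax := (ha f).max (hb f)
  rw [min_self] at hmin
  rw [max_self] at hmax
  exact tendsto_of_tendsto_of_tendsto_of_le_of_le hmin hmax (fun n => (hfz n).1)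
    (fun n => (hfz n).2)

theorem exists_strictMono_weakConv_of_bounded [CompleteSpace H] {u : ℕ → H} {C : ℝ}
    (hC : ∀ n, ‖u n‖ ≤ C) : ∃ φ : ℕ → ℕ, StrictMono φ ∧ ∃ v, WeakConv (u ∘ φ) v := by
  set M := (Submodule.span ℝ (range u)).topologicalClosure
  have huM (n : ℕ) : u n ∈ M :=
    Submodule.le_topologicalClosure _ (Submodule.subset_span (mem_range_self n))
  have : CompleteSpace M := (Submodule.isClosed_topologicalClosure _).completeSpace_coe
  have : TopologicalSpace.SeparableSpace M :=
    (countable_range u).isSeparable.span.closure.separableSpace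
  let x (n : ℕ) : WeakDual ℝ M := StrongDual.toWeakDual (toDual ℝ M ⟨u n, huM n⟩)
  obtain ⟨ℓ, -, φ, hφ, hℓ⟩ := WeakDual.isSeqCompact_closedBall ℝ M 0 C (x := x) fun n => by
    simpa [x] using hC n
  refine ⟨φ, hφ, ((toDual ℝ M).symm (WeakDual.toStrongDual ℓ) : M), fun f => ?_⟩
  set m := (toDual ℝ M).symm (f.comp M.subtypeL)
  have hf (y : M) : f y = ⟪y, m⟫ := by
    rw [real_inner_comm, toDual_symm_apply]; rfl
  have := ((WeakDual.eval_continuous m).tendsto ℓ).comp hℓ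
  rw [hf, toDual_symm_apply]
  refine this.congr fun n => ?_
  simp [x, hf ⟨u (φ n), huM (φ n)⟩]

theorem exists_mem_segment_eq {F : H → ℝ} (hF : Continuous F) {a b : H} {c : ℝ}
    (hb : F b ≤ c) (ha : c ≤ F a) : ∃ z ∈ segment ℝ a b, F z = c :=
  (convex_segment a b).isPreconnected.intermediate_value (right_mem_segment ℝ a b)
    (left_mem_segment ℝ a b) hF.continuousOn ⟨hb, ha⟩

theorem WeakConv.le_of_eventually_le {F : H → ℝ} (hF : Continuous F)
    (hFwlsc : ∀ (u : ℕ → H) (v : H), WeakConv u v → F v ≤ liminf (fun n => F (u n)) atTop)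
    {a b : ℕ → H} {v : H} (ha : WeakConv a v) (hb : WeakConv b v) {c : ℝ}
    (hac : ∀ᶠ n in atTop, c ≤ F (a n)) (hbc : ∀ᶠ n in atTop, F (b n) ≤ c) : F v ≤ c := by
  -- `liminf` in `ℝ` is junk when `F ∘ b` is unbounded below, so we apply weak lower
  -- semicontinuity to points of the segments `[a n, b n]` where `F` takes the value `c`.
  have (n : ℕ) : ∃ z ∈ segment ℝ (a n) (b n), c ≤ F (a n) → F (b n) ≤ c → F z = c := by
    by_cases h : c ≤ F (a n) ∧ F (b n) ≤ c
    · obtain ⟨z, hz, hFz⟩ := exists_mem_segment_eq hF h.2 h.1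
      exact ⟨z, hz, fun _ _ => hFz⟩
    · exact ⟨a n, left_mem_segment ℝ _ _, fun h₁ h₂ => (h ⟨h₁, h₂⟩).elim⟩
  choose z hz hFz using this
  have hFz_eq : (fun n => F (z n)) =ᶠ[atTop] fun _ => c :=
    (hac.and hbc).mono fun n h => hFz n h.1 h.2
  calc F v ≤ liminf (fun n => F (z n)) atTop := hFwlsc z v (ha.of_mem_segment hb hz)
    _ = c := by rw [liminf_congr hFz_eq, liminf_const]

end WeakConvergence

theorem stmt_12_general {H : Type*} [NormedAddCommGroup H] [InnerProductSpace ℝ H]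
    [CompleteSpace H]
    (F : H → ℝ) (hFcont : Continuous F)
    (hFwlsc : ∀ (u : ℕ → H) (v : H), WeakConv u v → F v ≤ liminf (fun n => F (u n)) atTop)
    (V : ℕ → Submodule ℝ H) (hVmono : Monotone V)
    (Vinf : Submodule ℝ H)
    (K : Set H)
    (happrox : ∀ u ∈ (Vinf : Set H) ∩ K,
      ∃ w : ℕ → H, (∀ k, w k ∈ (V k : Set H) ∩ K) ∧ Tendsto w atTop (nhds u))
    (Φ : ℕ → H)
    (hΦmem : ∀ k, Φ k ∈ (V k : Set H) ∩ K)
    (hΦmin : ∀ k, ∀ v ∈ (V k : Set H) ∩ K, F (Φ k) ≤ F v)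
    (hΦbdd : ∃ C, ∀ k, ‖Φ k‖ ≤ C)
    (hweaklim : ∀ (φ : ℕ → ℕ), StrictMono φ → ∀ v : H,
      WeakConv (fun k => Φ (φ k)) v → v ∈ (Vinf : Set H) ∩ K) :
    ∃ u ∈ (Vinf : Set H) ∩ K, (∀ v ∈ (Vinf : Set H) ∩ K, F u ≤ F v) ∧
      Tendsto (fun k => F (Φ k)) atTop (nhds (F u)) := by
  obtain ⟨C, hC⟩ := hΦbdd
  obtain ⟨φ, hφ, v, hv⟩ := exists_strictMono_weakConv_of_bounded hC
  have hvK : v ∈ (Vinf : Set H) ∩ K := hweaklim φ hφ v hv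
  have hanti : Antitone fun k => F (Φ k) := fun k k' hkk' =>
    hΦmin k' (Φ k) ⟨hVmono hkk' (hΦmem k).1, (hΦmem k).2⟩
  have hrecovery (u : H) (hu : u ∈ (Vinf : Set H) ∩ K) : ∃ w : ℕ → H, Tendsto w atTop (𝓝 u) ∧
      Tendsto (fun k => F (w k)) atTop (𝓝 (F u)) ∧ ∀ k, F (Φ k) ≤ F (w k) := by
    obtain ⟨w, hw, hwu⟩ := happrox u hu
    exact ⟨w, hwu, (hFcont.tendsto u).comp hwu, fun k => hΦmin k (w k) (hw k)⟩
  have hlow (k : ℕ) : F v ≤ F (Φ k) := by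
    by_contra! hk
    obtain ⟨w, hwv, hFw, -⟩ := hrecovery v hvK
    exact hk.not_ge <| hwv.weakConv.le_of_eventually_le hFcont hFwlsc hv
      (hFw.eventually (eventually_ge_nhds hk))
      ((hφ.tendsto_atTop.eventually_ge_atTop k).mono fun n hn => hanti hn)
  refine ⟨v, hvK, fun u hu => ?_, ?_⟩
  · obtain ⟨w, -, hFw, hΦw⟩ := hrecovery u hu
    exact ge_of_tendsto' hFw fun k => (hlow k).trans (hΦw k)
  · obtain ⟨w, -, hFw, hΦw⟩ := hrecovery v hvK
    exact tendsto_of_tendsto_of_tendsto_of_le_of_le tendsto_const_nhds hFw hlow hΦw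

theorem stmt_12 {H : Type*} [NormedAddCommGroup H] [InnerProductSpace ℝ H]
    [CompleteSpace H]
    (F : H → ℝ) (hFcont : Continuous F)
    (hFwlsc : ∀ (u : ℕ → H) (v : H), WeakConv u v → F v ≤ liminf (fun n => F (u n)) atTop)
    (V : ℕ → Submodule ℝ H) (hVmono : Monotone V)
    (hVclosed : ∀ k, IsClosed (V k : Set H))
    (Vinf : Submodule ℝ H) (hVinfclosed : IsClosed (Vinf : Set H))
    (hdense : closure (⋃ k, (V k : Set H)) = (Vinf : Set H))
    (K : Set H)
    (hKweaklyClosed : ∀ (u : ℕ → H) (v : H), (∀ n, u n ∈ K) → WeakConv u v → v ∈ K)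
    (happrox : ∀ u ∈ (Vinf : Set H) ∩ K,
      ∃ w : ℕ → H, (∀ k, w k ∈ (V k : Set H) ∩ K) ∧ Tendsto w atTop (nhds u))
    (Φ : ℕ → H)
    (hΦmem : ∀ k, Φ k ∈ (V k : Set H) ∩ K)
    (hΦmin : ∀ k, ∀ v ∈ (V k : Set H) ∩ K, F (Φ k) ≤ F v)
    (hΦbdd : ∃ C, ∀ k, ‖Φ k‖ ≤ C)
    (hweaklim : ∀ (φ : ℕ → ℕ), StrictMono φ → ∀ v : H,
      WeakConv (fun k => Φ (φ k)) v → v ∈ (Vinf : Set H) ∩ K) :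
    ∃ u ∈ (Vinf : Set H) ∩ K, (∀ v ∈ (Vinf : Set H) ∩ K, F u ≤ F v) ∧
      Tendsto (fun k => F (Φ k)) atTop (nhds (F u)) :=
  stmt_12_general F hFcont hFwlsc V hVmono Vinf K happrox Φ hΦmem hΦmin hΦbdd hweaklim
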